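/- arXiv:1706.00986 — 2 statements merged into one kernel-verified Lean document; each statement's English description precedes it below -/
import Mathlib

section
/- For an integer N ≥ 2, the Fourier matrix F_N has minimal defect, d(F_N) = 2N−1, if and only if N is prime. -/
noncomputable def defectSubmodule {I J : Type*} [Fintype I] [Fintype J]
    (H : Matrix I J ℂ) : Submodule ℝ (Matrix I J ℝ) where
  carrier := {A | ∀ i j, ∑ k, H i k * star (H j k) * ((A i k : ℂ) - (A j k : ℂ)) = 0}
  zero_mem' := by intro i j; simp
  add_mem' := by
    intro A B hA hB i j
    have h : ∀ k ∈ Finset.univ, H i k * star (H j k) * (((A + B) i k : ℂ) - (((A + B) j k : ℝ) : ℂ))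
        = H i k * star (H j k) * ((A i k : ℂ) - (A j k : ℂ))
          + H i k * star (H j k) * ((B i k : ℂ) - (B j k : ℂ)) := by
      intro k _
      simp only [Matrix.add_apply]
      push_cast
      ring
    rw [Finset.sum_congr rfl h, Finset.sum_add_distrib, hA i j, hB i j, add_zero]
  smul_mem' := by
    intro c A hA i j
    have h : ∀ k ∈ Finset.univ, H i k * star (H j k) * (((c • A) i k : ℂ) - (((c • A) j k : ℝ) : ℂ))
        = (c : ℂ) * (H i k * star (H j k) * ((A i k : ℂ) - (A j k : ℂ))) := by
      intro k _
      simp only [Matrix.smul_apply, smul_eq_mul]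
      push_cast
      ring
    rw [Finset.sum_congr rfl h, ← Finset.mul_sum, hA i j, mul_zero]

noncomputable def defect {I J : Type*} [Fintype I] [Fintype J] (H : Matrix I J ℂ) : ℕ :=
  Module.finrank ℝ (defectSubmodule H)

/-- The Fourier matrix `F_N = (w^{ij})` with `w = e^{2πi/N}`. -/
noncomputable def FourierMatrix (N : ℕ) : Matrix (Fin N) (Fin N) ℂ :=
  Matrix.of fun i j => Complex.exp (2 * Real.pi * Complex.I / N) ^ ((i : ℕ) * (j : ℕ))

/-!
The defect space always contains the `(2N - 1)`-dimensional space of matrices `a i + b k`,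
because the rows of `F_N` are orthogonal. Indexing by `ZMod N`, a real matrix `A` lies in the
defect space iff for every frequency `d` the `d`-th Fourier coefficient of the row `A x` is
`d`-periodic in `x`. For `N` prime every `d ≠ 0` generates `ZMod N`, so these coefficients do not
depend on the row, and Fourier inversion makes `A x k - A 0 k` independent of `k`. For `N` with a
proper divisor `m`, the matrix `ε x * cos (2π m k / N)`, with `ε` the indicator of the multiples
of `m`, lies in the defect space but is not of the form `a i + b k`.
-/

open Matrix

section Reindex

variable {I J I' J' : Type*} [Fintype I] [Fintype J] [Fintype I'] [Fintype J']

lemma defectSubmodule_submatrix (H : Matrix I J ℂ)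
    (e : I' ≃ I) (f : J' ≃ J) :
    defectSubmodule (H.submatrix e f) =
      (defectSubmodule H).map (Matrix.reindexLinearEquiv ℝ ℝ e.symm f.symm).toLinearMap := by
  ext A
  rw [Submodule.mem_map_equiv]
  simp only [defectSubmodule, Submodule.mem_mk, AddSubmonoid.mem_mk, AddSubsemigroup.mem_mk,
    Set.mem_ofPred_eq, Matrix.symm_reindexLinearEquiv, Matrix.coe_reindexLinearEquiv,
    Matrix.reindex_apply, Equiv.symm_symm, Matrix.submatrix_apply]
  rw [e.forall_congr_left]
  refine forall_congr' fun i => ?_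
  rw [e.forall_congr_left]
  refine forall_congr' fun j => ?_
  rw [← f.sum_comp]
  simp only [Equiv.apply_symm_apply, Equiv.symm_apply_apply]

lemma defect_submatrix (H : Matrix I J ℂ) (e : I' ≃ I) (f : J' ≃ J) :
    defect (H.submatrix e f) = defect H := by
  rw [defect, defectSubmodule_submatrix, LinearEquiv.finrank_map_eq, defect]

end Reindex

section OuterSum

variable (K : Type*) [Field K] (I J : Type*)

def outerSum : (I → K) × (J → K) →ₗ[K] Matrix I J K where
  toFun p := Matrix.of fun i k => p.1 i + p.2 k
  map_add' p q := by ext; simp only [Prod.fst_add, Prod.snd_add, Pi.add_apply, Matrix.of_apply,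
    Matrix.add_apply]; ring
  map_smul' c p := by ext; simp [mul_add]

lemma outerSum_apply (p : (I → K) × (J → K)) (i : I) (k : J) :
    outerSum K I J p i k = p.1 i + p.2 k := rfl

lemma ker_outerSum [Nonempty I] [Nonempty J] :
    LinearMap.ker (outerSum K I J) = K ∙ (fun _ => 1, fun _ => -1) := by
  obtain ⟨i₀⟩ := ‹Nonempty I›
  obtain ⟨k₀⟩ := ‹Nonempty J›
  ext p
  rw [LinearMap.mem_ker, Submodule.mem_span_singleton]
  constructor
  · intro hp
    have hsum (i : I) (k : J) : p.1 i + p.2 k = 0 := by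
      simpa [outerSum_apply] using congrFun (congrFun hp i) k
    refine ⟨p.1 i₀, Prod.ext (funext fun i => ?_) (funext fun k => ?_)⟩
    · simp only [Prod.smul_fst, Pi.smul_apply, smul_eq_mul]
      linear_combination hsum i₀ k₀ - hsum i k₀
    · simp only [Prod.smul_snd, Pi.smul_apply, smul_eq_mul]
      linear_combination -hsum i₀ k
  · rintro ⟨c, rfl⟩
    ext
    simp [outerSum_apply]

lemma finrank_range_outerSum [Fintype I] [Fintype J] [Nonempty I] [Nonempty J] :
    Module.finrank K (LinearMap.range (outerSum K I J)) = Fintype.card I + Fintype.card J - 1 := by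
  have hrank := LinearMap.finrank_range_add_finrank_ker (outerSum K I J)
  rw [ker_outerSum, finrank_span_singleton (by simp [Prod.ext_iff, funext_iff]),
    Module.finrank_prod, Module.finrank_fintype_fun_eq_card,
    Module.finrank_fintype_fun_eq_card] at hrank
  omega

noncomputable abbrev trivialDefectSubmodule : Submodule ℝ (Matrix I J ℝ) :=
  LinearMap.range (outerSum ℝ I J)

end OuterSum

lemma trivialDefectSubmodule_le {I J : Type*} [Fintype I] [Fintype J] {H : Matrix I J ℂ}
    (hH : (H * Hᴴ).IsDiag) :
    trivialDefectSubmodule I J ≤ defectSubmodule H := by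
  rintro _ ⟨p, rfl⟩ i j
  by_cases hij : i = j
  · simp [hij]
  · have hterm (k : J) :
        H i k * star (H j k) * ((outerSum ℝ I J p i k : ℂ) - outerSum ℝ I J p j k)
        = H i k * star (H j k) * ((p.1 i : ℂ) - p.1 j) := by
      simp only [outerSum_apply]; push_cast; ring
    have hrow : ∑ k, H i k * star (H j k) = 0 := by
      simpa [Matrix.mul_apply] using hH hij
    rw [Finset.sum_congr rfl fun k _ => hterm k, ← Finset.sum_mul, hrow, zero_mul]

lemma Function.Periodic.eq_apply_zero_of_isUnit {N : ℕ} [NeZero N] {α : Type*}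
    {f : ZMod N → α} {d : ZMod N} (hf : Function.Periodic f d) (hd : IsUnit d) (x : ZMod N) :
    f x = f 0 := by
  obtain ⟨u, rfl⟩ := hd
  have hx : x = (x * ↑u⁻¹).val • (u : ZMod N) := by
    rw [nsmul_eq_mul, ZMod.natCast_zmod_val, mul_assoc, Units.inv_mul, mul_one]
  rw [hx]
  exact hf.nsmul_eq _

namespace ZMod

open Function

variable {N : ℕ} [NeZero N]

lemma star_stdAddChar (x : ZMod N) : star (stdAddChar x) = stdAddChar (-x) := by
  rw [stdAddChar_apply, stdAddChar_apply, AddChar.map_neg_eq_inv, Circle.coe_inv_eq_conj]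
  rfl

lemma sum_stdAddChar_mul (a : ZMod N) :
    ∑ k, stdAddChar (a * k) = if a = 0 then (N : ℂ) else 0 := by
  simp_rw [mul_comm a, AddChar.sum_mulShift a (isPrimitive_stdAddChar N), ZMod.card,
    Nat.cast_ite, Nat.cast_zero]

lemma stdAddChar_re_eq_one_iff {x : ZMod N} : (stdAddChar x).re = 1 ↔ x = 0 := by
  refine ⟨fun h => injective_stdAddChar ?_, fun h => by simp [h]⟩
  have hnorm : ‖stdAddChar x‖ = 1 := by rw [stdAddChar_apply, Circle.norm_coe]
  have him : (stdAddChar x).im = 0 := Complex.abs_re_eq_norm.1 (by rw [h, hnorm, abs_one])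
  rw [AddChar.map_zero_eq_one]
  exact Complex.ext h him

lemma dft_stdAddChar_mul (a d : ZMod N) :
    𝓕 (fun k => stdAddChar (a * k)) d = if a = d then (N : ℂ) else 0 := by
  have hterm (k : ZMod N) :
      stdAddChar (-(k * d)) • stdAddChar (a * k) = stdAddChar ((a - d) * k) := by
    rw [smul_eq_mul, ← AddChar.map_add_eq_mul]
    ring_nf
  simp_rw [dft_apply, hterm, sum_stdAddChar_mul, sub_eq_zero]

lemma dft_re_stdAddChar_mul_eq_zero {a d : ZMod N} (h₁ : a ≠ d) (h₂ : -a ≠ d) :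
    𝓕 (fun k => ((stdAddChar (a * k)).re : ℂ)) d = 0 := by
  have hre : (fun k => ((stdAddChar (a * k)).re : ℂ))
      = (2⁻¹ : ℂ) • ((fun k => stdAddChar (a * k)) + fun k => stdAddChar (-a * k)) := by
    ext k
    rw [Complex.re_eq_add_conj, ← Complex.star_def, star_stdAddChar]
    simp only [Pi.smul_apply, Pi.add_apply, smul_eq_mul, neg_mul]
    ring
  rw [hre, dft_const_smul, map_add, Pi.smul_apply, Pi.add_apply, dft_stdAddChar_mul,
    dft_stdAddChar_mul, if_neg h₁, if_neg h₂, add_zero, smul_zero]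

lemma apply_eq_apply_zero_of_dft_eq_zero {E : Type*} [AddCommGroup E] [Module ℂ E]
    {Φ : ZMod N → E} (h : ∀ d ≠ 0, 𝓕 Φ d = 0) (j : ZMod N) : Φ j = Φ 0 := by
  have hΦ (j : ZMod N) : Φ j = (N : ℂ)⁻¹ • 𝓕 Φ 0 := by
    conv_lhs => rw [← LinearEquiv.symm_apply_apply 𝓕 Φ]
    rw [invDFT_apply, Finset.sum_eq_single 0 (fun d _ hd => by rw [h d hd, smul_zero])
      (by simp), zero_mul, AddChar.map_zero_eq_one, one_smul]
  rw [hΦ j, hΦ 0]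

variable (N) in
noncomputable def fourierMatrix : Matrix (ZMod N) (ZMod N) ℂ := of fun x k => stdAddChar (x * k)

lemma fourierMatrix_mul_conjTranspose_isDiag : (fourierMatrix N * (fourierMatrix N)ᴴ).IsDiag := by
  intro x y hxy
  have hterm (k : ZMod N) : stdAddChar (x * k) * star (stdAddChar (y * k))
      = stdAddChar ((x - y) * k) := by
    rw [star_stdAddChar, ← AddChar.map_add_eq_mul]
    ring_nf
  simp only [mul_apply, conjTranspose_apply, fourierMatrix, of_apply]
  rw [Finset.sum_congr rfl fun k _ => hterm k, sum_stdAddChar_mul, if_neg (sub_ne_zero.2 hxy)]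

lemma mem_defectSubmodule_fourierMatrix_iff {A : Matrix (ZMod N) (ZMod N) ℝ} :
    A ∈ defectSubmodule (fourierMatrix N) ↔
      ∀ d, Periodic (fun x => 𝓕 (fun k => (A x k : ℂ)) d) d := by
  have hcond (i j : ZMod N) :
      ∑ k, fourierMatrix N i k * star (fourierMatrix N j k) * ((A i k : ℂ) - A j k)
        = 𝓕 (fun k => (A i k : ℂ)) (j - i) - 𝓕 (fun k => (A j k : ℂ)) (j - i) := by
    simp only [dft_apply, fourierMatrix, of_apply, star_stdAddChar, smul_eq_mul,
      ← Finset.sum_sub_distrib, ← AddChar.map_add_eq_mul, ← mul_sub]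
    refine Finset.sum_congr rfl fun k _ => ?_
    ring_nf
  change (∀ i j, _) ↔ _
  simp only [hcond, sub_eq_zero]
  constructor
  · intro h d x
    simpa using (h x (x + d)).symm
  · intro h i j
    simpa using (h (j - i) i).symm

lemma defectSubmodule_fourierMatrix_le_of_prime (hN : N.Prime) :
    defectSubmodule (fourierMatrix N) ≤ trivialDefectSubmodule (ZMod N) (ZMod N) := by
  have := Fact.mk hN
  intro A hA
  rw [mem_defectSubmodule_fourierMatrix_iff] at hA
  have hrow (x k : ZMod N) : (A x k : ℂ) - A 0 k = A x 0 - A 0 0 := by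
    refine apply_eq_apply_zero_of_dft_eq_zero
      (Φ := (fun k => (A x k : ℂ)) - fun k => (A 0 k : ℂ)) (fun d hd => ?_) k
    rw [map_sub, Pi.sub_apply, sub_eq_zero]
    exact (hA d).eq_apply_zero_of_isUnit (Ne.isUnit hd) x
  refine ⟨(fun x => A x 0 - A 0 0, fun k => A 0 k), ?_⟩
  ext x k
  rw [outerSum_apply]
  have := hrow x k
  norm_cast at this
  linarith

lemma of_mul_re_stdAddChar_mem_defectSubmodule {δ : ZMod N} {ε : ZMod N → ℝ}
    (hε : Periodic ε δ) :
    of (fun x k => ε x * (stdAddChar (δ * k)).re) ∈ defectSubmodule (fourierMatrix N) := by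
  rw [mem_defectSubmodule_fourierMatrix_iff]
  intro d x
  simp only [of_apply, Complex.ofReal_mul, dft_const_mul]
  by_cases hd : δ = d ∨ -δ = d
  · obtain rfl | rfl := hd
    · rw [hε x]
    · rw [hε.neg x]
  · rw [not_or] at hd
    rw [dft_re_stdAddChar_mul_eq_zero hd.1 hd.2, mul_zero, mul_zero]

lemma of_mul_re_stdAddChar_notMem_trivialDefectSubmodule {δ : ZMod N} (hδ : δ ≠ 0)
    {ε : ZMod N → ℝ} {x₀ x₁ : ZMod N} (hε : ε x₀ ≠ ε x₁) :
    of (fun x k => ε x * (stdAddChar (δ * k)).re) ∉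
      trivialDefectSubmodule (ZMod N) (ZMod N) := by
  rintro ⟨p, hp⟩
  have hentry (x k : ZMod N) : p.1 x + p.2 k = ε x * (stdAddChar (δ * k)).re := by
    rw [← outerSum_apply, hp, of_apply]
  have hre : (stdAddChar (δ * 1)).re = 1 := by
    have hprod :
        (ε x₀ - ε x₁) * ((stdAddChar (δ * 1)).re - (stdAddChar (δ * 0)).re) = 0 := by
      linear_combination (hentry x₁ 1) - (hentry x₀ 1) + (hentry x₀ 0) - (hentry x₁ 0)
    rw [mul_zero, AddChar.map_zero_eq_one, Complex.one_re] at hprod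
    linarith [(mul_eq_zero.1 hprod).resolve_left (sub_ne_zero.2 hε)]
  exact hδ (by simpa using stdAddChar_re_eq_one_iff.1 hre)

lemma exists_mem_defectSubmodule_fourierMatrix_notMem_of_not_prime (h2 : 2 ≤ N)
    (hN : ¬ N.Prime) :
    ∃ A ∈ defectSubmodule (fourierMatrix N),
      A ∉ trivialDefectSubmodule (ZMod N) (ZMod N) := by
  obtain ⟨m, hmN, hm2, hmlt⟩ := Nat.exists_dvd_of_not_prime2 h2 hN
  let ε : ZMod N → ℝ := fun x => if castHom hmN (ZMod m) x = 0 then 1 else 0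
  have hε : Periodic ε m := fun x => by
    simp only [ε, map_add, map_natCast, natCast_self, add_zero]
  have hε01 : ε 0 ≠ ε 1 := by
    have h1 : (1 : ZMod m) ≠ 0 := by
      rw [← Nat.cast_one, Ne, natCast_eq_zero_iff, Nat.dvd_one]
      omega
    simp only [ε, map_zero, map_one, if_neg h1]
    norm_num
  have hδ : (m : ZMod N) ≠ 0 := by
    rw [Ne, natCast_eq_zero_iff]
    exact fun h => absurd (Nat.le_of_dvd (by omega) h) (by omega)
  exact ⟨_, of_mul_re_stdAddChar_mem_defectSubmodule hε,
    of_mul_re_stdAddChar_notMem_trivialDefectSubmodule hδ hε01⟩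

lemma defectSubmodule_fourierMatrix_eq_iff_prime (h2 : 2 ≤ N) :
    defectSubmodule (fourierMatrix N) = trivialDefectSubmodule (ZMod N) (ZMod N) ↔ N.Prime := by
  refine ⟨fun h => ?_, fun hN => le_antisymm (defectSubmodule_fourierMatrix_le_of_prime hN)
    (trivialDefectSubmodule_le fourierMatrix_mul_conjTranspose_isDiag)⟩
  by_contra hN
  obtain ⟨A, hA, hAT⟩ := exists_mem_defectSubmodule_fourierMatrix_notMem_of_not_prime h2 hN
  exact hAT (h ▸ hA)

lemma finEquiv_apply (i : Fin N) : finEquiv N i = ((i : ℕ) : ZMod N) := by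
  obtain ⟨n, rfl⟩ := Nat.exists_eq_succ_of_ne_zero (NeZero.ne N)
  exact (Fin.cast_val_eq_self i).symm

end ZMod

lemma FourierMatrix_eq_submatrix (N : ℕ) [NeZero N] :
    FourierMatrix N =
      (ZMod.fourierMatrix N).submatrix (ZMod.finEquiv N).toEquiv (ZMod.finEquiv N).toEquiv := by
  ext i k
  change _ = ZMod.fourierMatrix N (ZMod.finEquiv N i) (ZMod.finEquiv N k)
  rw [ZMod.finEquiv_apply, ZMod.finEquiv_apply,
    ZMod.fourierMatrix, of_apply, ← Nat.cast_mul, ZMod.stdAddChar_apply, ZMod.toCircle_natCast,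
    FourierMatrix, of_apply, ← Complex.exp_nat_mul]
  congr 1
  push_cast
  ring

lemma defect_FourierMatrix (N : ℕ) [NeZero N] :
    defect (FourierMatrix N) = Module.finrank ℝ (defectSubmodule (ZMod.fourierMatrix N)) := by
  rw [FourierMatrix_eq_submatrix, defect_submatrix, defect]

/-- for `N ≥ 2`, the Fourier matrix `F_N` has minimal defect `2N − 1`
if and only if `N` is prime. -/
theorem stmt_5 (N : ℕ) (hN : 2 ≤ N) :
    defect (FourierMatrix N) = 2 * N - 1 ↔ N.Prime := by
  have : NeZero N := ⟨by omega⟩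
  have htriv : Module.finrank ℝ (trivialDefectSubmodule (ZMod N) (ZMod N)) = 2 * N - 1 := by
    rw [finrank_range_outerSum, ZMod.card, two_mul]
  rw [defect_FourierMatrix, ← htriv, ← ZMod.defectSubmodule_fourierMatrix_eq_iff_prime hN]
  exact ⟨fun h => (Submodule.eq_of_le_of_finrank_eq
    (trivialDefectSubmodule_le ZMod.fourierMatrix_mul_conjTranspose_isDiag) h.symm).symm,
    fun h => by rw [h]⟩
end

section
/- Let M, N ≥ 1 and consider the Kronecker product F_M ⊗ F_N of the Fourier matrices F_M and F_N, which is a complex Hadamard matrix of size MN. Then d(F_M ⊗ F_N) = d(F_M)·d(F_N) if and only if gcd(M,N) = 1. -/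
open scoped Kronecker

/-!
Let `ψ` be a nondegenerate symmetric pairing of a finite abelian group `G` into its characters:
`F_N` is the table of such a pairing on `ℤ/N`, and `F_M ⊗ F_N` the table of the product pairing
on `ℤ/M × ℤ/N`. The defect equations of any `H` are stable under complex conjugation, so `d(H)`
is also the complex dimension of their complex solution space. For `H = (ψ(g, h))` the equation
indexed by `(i, j)` reads `(AH)(i, i - j) = (AH)(j, i - j)`: column `s` of `AH` is `s`-periodic.
As `H` is invertible, `d(H) = ∑ₛ |G| / ord s`. Finally
`|G × G'| / ord (g, g') = (|G| / ord g) (|G'| / ord g') gcd(ord g, ord g')`, so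
`d(F_M ⊗ F_N) ≥ d(F_M) d(F_N)`, with equality iff all these gcds are `1`, which by Cauchy's
theorem happens iff `gcd(M, N) = 1`.
-/

open Finset Matrix Module
open scoped ComplexConjugate

section RealForm

variable {I J : Type*} [Fintype J]

noncomputable def complexDefectSubmodule (H : Matrix I J ℂ) : Submodule ℂ (Matrix I J ℂ) where
  carrier := {A | ∀ i j, ∑ k, H i k * star (H j k) * (A i k - A j k) = 0}
  zero_mem' := by simp
  add_mem' {A B} hA hB i j := by
    simp only [Matrix.add_apply, add_sub_add_comm, mul_add, sum_add_distrib, hA i j, hB i j,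
      add_zero]
  smul_mem' c A hA i j := by
    simp only [Matrix.smul_apply, smul_eq_mul, ← mul_sub, mul_left_comm _ c, ← mul_sum, hA i j,
      mul_zero]

theorem finrank_comap_mapMatrix_ofReal [Fintype I] {S : Submodule ℂ (Matrix I J ℂ)}
    (hS : ∀ A ∈ S, A.map conj ∈ S) :
    finrank ℝ ((S.restrictScalars ℝ).comap (Algebra.linearMap ℝ ℂ).mapMatrix) =
      finrank ℂ S := by
  set ofReal : Matrix I J ℝ →ₗ[ℝ] Matrix I J ℂ := (Algebra.linearMap ℝ ℂ).mapMatrix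
  set S' := (S.restrictScalars ℝ).comap ofReal
  have re_mem (A : Matrix I J ℂ) (hA : A ∈ S) : A.map Complex.re ∈ S' := by
    have h : ofReal (A.map Complex.re) = (2⁻¹ : ℂ) • (A + A.map conj) := by
      ext i j; simp [ofReal, Complex.ext_iff]; ring
    simpa [S', h] using S.smul_mem _ (S.add_mem hA (hS A hA))
  have im_mem (A : Matrix I J ℂ) (hA : A ∈ S) : A.map Complex.im ∈ S' := by
    have h : ofReal (A.map Complex.im) = (-Complex.I / 2) • (A - A.map conj) := by
      ext i j; simp [ofReal, Complex.ext_iff]; ring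
    simpa [S', h] using S.smul_mem _ (S.sub_mem hA (hS A hA))
  -- `S` is the complexification of its real points `S'`
  let e : (S' × S') ≃ₗ[ℝ] S :=
    { toFun x := ⟨ofReal x.1 + Complex.I • ofReal x.2, S.add_mem x.1.2 (S.smul_mem _ x.2.2)⟩
      invFun A := (⟨_, re_mem A A.2⟩, ⟨_, im_mem A A.2⟩)
      map_add' x y := by ext; simp [ofReal]; ring
      map_smul' c x := by ext; simp [ofReal]; ring
      left_inv x := by ext <;> simp [ofReal]
      right_inv A := by ext; simp [ofReal, Complex.ext_iff] }
  have h := e.finrank_eq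
  rw [finrank_prod, finrank_real_of_complex] at h
  omega

theorem map_conj_mem_complexDefectSubmodule {H : Matrix I J ℂ} {A : Matrix I J ℂ}
    (hA : A ∈ complexDefectSubmodule H) : A.map conj ∈ complexDefectSubmodule H := by
  -- the `(i, j)` equation for `conj A` is minus the conjugate of the `(j, i)` equation for `A`
  intro i j
  have h := congrArg conj (hA j i)
  simp only [map_sum, map_mul, map_sub, map_zero] at h
  rw [← neg_eq_zero, ← h, ← sum_neg_distrib]
  refine sum_congr rfl fun k _ => ?_
  simp only [map_apply, RCLike.star_def, Complex.conj_conj]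
  ring

theorem defect_eq_finrank_complexDefectSubmodule [Fintype I] (H : Matrix I J ℂ) :
    defect H = finrank ℂ (complexDefectSubmodule H) := by
  rw [← finrank_comap_mapMatrix_ofReal fun _ => map_conj_mem_complexDefectSubmodule]
  rfl

end RealForm

section Periodic

variable (K : Type*) [Field K] {G : Type*} [AddCommGroup G]

def periodicSubmodule (s : G) : Submodule K (G → K) where
  carrier := {f | Function.Periodic f s}
  zero_mem' _ := rfl
  add_mem' hf hg x := by simp [hf x, hg x]
  smul_mem' c f hf x := by simp [hf x]

theorem periodicSubmodule_eq_range (s : G) :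
    periodicSubmodule K s =
      LinearMap.range
        (LinearMap.funLeft K K (QuotientAddGroup.mk : G → G ⧸ AddSubgroup.zmultiples s)) := by
  ext f
  constructor
  · intro hf
    exact ⟨Function.Periodic.lift hf, funext fun g => Function.Periodic.lift_coe hf g⟩
  · rintro ⟨φ, rfl⟩ g
    simp [LinearMap.funLeft_apply]

theorem finrank_periodicSubmodule [Fintype G] (s : G) :
    finrank K (periodicSubmodule K s) = Fintype.card G / addOrderOf s := by
  rw [periodicSubmodule_eq_range, LinearMap.finrank_range_of_inj
    (LinearMap.funLeft_injective_of_surjective _ _ _ QuotientAddGroup.mk_surjective),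
    Module.finrank_fintype_fun_eq_card, Fintype.card_eq_nat_card, ← AddSubgroup.index,
    ← Nat.card_eq_fintype_card, ← (AddSubgroup.zmultiples s).index_mul_card,
    Nat.card_zmultiples, Nat.mul_div_cancel _ (addOrderOf_pos s)]

variable (G) in
def periodicColumns : Submodule K (Matrix G G K) where
  carrier := {V | ∀ s, Function.Periodic (fun g => V g s) s}
  zero_mem' _ _ := rfl
  add_mem' hV hW s x := by simp [hV s x, hW s x]
  smul_mem' c V hV s x := by simp [hV s x]

theorem finrank_periodicColumns [Fintype G] :
    finrank K (periodicColumns K G) = ∑ s : G, Fintype.card G / addOrderOf s := by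
  let e : periodicColumns K G ≃ₗ[K] ∀ s : G, periodicSubmodule K s :=
    { toFun V s := ⟨fun g => V.1 g s, V.2 s⟩
      invFun F := ⟨Matrix.of fun g s => (F s).1 g, fun s => (F s).2⟩
      map_add' _ _ := rfl
      map_smul' _ _ := rfl
      left_inv _ := rfl
      right_inv _ := rfl }
  rw [e.finrank_eq, Module.finrank_pi_fintype]
  exact sum_congr rfl fun s _ => finrank_periodicSubmodule K s

end Periodic

section Pairing

variable {G H : Type*} [AddCommGroup G] [AddCommGroup H]

structure IsNondegSymmPairing (ψ : G → AddChar G ℂ) : Prop where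
  symm : ∀ g h, ψ g h = ψ h g
  ne_one : ∀ g ≠ 0, ψ g ≠ 1

def pairingMatrix (ψ : G → AddChar G ℂ) : Matrix G G ℂ := Matrix.of fun g h => ψ g h

def prodPairing (ψ : G → AddChar G ℂ) (φ : H → AddChar H ℂ) :
    G × H → AddChar (G × H) ℂ :=
  fun p => (ψ p.1).compAddMonoidHom (AddMonoidHom.fst G H) *
    (φ p.2).compAddMonoidHom (AddMonoidHom.snd G H)

theorem prodPairing_apply (ψ : G → AddChar G ℂ) (φ : H → AddChar H ℂ) (p q : G × H) :
    prodPairing ψ φ p q = ψ p.1 q.1 * φ p.2 q.2 := rfl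

theorem pairingMatrix_prodPairing (ψ : G → AddChar G ℂ) (φ : H → AddChar H ℂ) :
    pairingMatrix (prodPairing ψ φ) = pairingMatrix ψ ⊗ₖ pairingMatrix φ := rfl

namespace IsNondegSymmPairing

variable {ψ : G → AddChar G ℂ} (hψ : IsNondegSymmPairing ψ)
include hψ

theorem prod {φ : H → AddChar H ℂ} (hφ : IsNondegSymmPairing φ) :
    IsNondegSymmPairing (prodPairing ψ φ) where
  symm p q := by rw [prodPairing_apply, prodPairing_apply, hψ.symm, hφ.symm]
  ne_one p hp := by
    rcases p with ⟨g, h⟩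
    by_cases hg : g = 0
    · subst hg
      obtain ⟨y, hy⟩ := AddChar.ne_one_iff.1 (hφ.ne_one h fun h0 => hp (by simp [h0]))
      refine AddChar.ne_one_iff.2 ⟨(0, y), ?_⟩
      rwa [prodPairing_apply, hψ.symm, AddChar.map_zero_eq_one, one_mul]
    · obtain ⟨x, hx⟩ := AddChar.ne_one_iff.1 (hψ.ne_one g hg)
      refine AddChar.ne_one_iff.2 ⟨(x, 0), ?_⟩
      rwa [prodPairing_apply, AddChar.map_zero_eq_one, mul_one]

variable [Fintype G]

theorem sum_apply_left [DecidableEq G] (d : G) :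
    ∑ k, ψ k d = if d = 0 then (Fintype.card G : ℂ) else 0 := by
  classical
  have h_eq_zero : ψ d = 0 ↔ d = 0 := by
    refine ⟨not_imp_not.1 (hψ.ne_one d), fun hd => ?_⟩
    ext k
    rw [hd, hψ.symm, AddChar.map_zero_eq_one, AddChar.zero_apply]
  simp_rw [hψ.symm _ d, AddChar.sum_eq_ite, h_eq_zero]

theorem mul_star_apply (i j k : G) : ψ i k * star (ψ j k) = ψ k (i - j) := by
  rw [hψ.symm i, hψ.symm j, RCLike.star_def, ← AddChar.map_neg_eq_conj,
    ← AddChar.map_add_eq_mul, sub_eq_add_neg]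

theorem pairingMatrix_mul_conjTranspose [DecidableEq G] :
    pairingMatrix ψ * (pairingMatrix ψ)ᴴ = (Fintype.card G : ℂ) • 1 := by
  ext i j
  simp only [mul_apply, conjTranspose_apply, pairingMatrix, of_apply, hψ.mul_star_apply,
    hψ.sum_apply_left, sub_eq_zero, Matrix.smul_apply, one_apply, smul_eq_mul, mul_ite, mul_one,
    mul_zero]

theorem isUnit_pairingMatrix [DecidableEq G] : IsUnit (pairingMatrix ψ) := by
  refine IsUnit.of_mul_eq_one ((Fintype.card G : ℂ)⁻¹ • (pairingMatrix ψ)ᴴ) ?_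
  rw [Matrix.mul_smul, hψ.pairingMatrix_mul_conjTranspose, smul_smul,
    inv_mul_cancel₀ (Nat.cast_ne_zero.2 Fintype.card_ne_zero), one_smul]

theorem mem_complexDefectSubmodule_iff (A : Matrix G G ℂ) :
    A ∈ complexDefectSubmodule (pairingMatrix ψ) ↔
      A * pairingMatrix ψ ∈ periodicColumns ℂ G := by
  have key (i j : G) : ∑ k, pairingMatrix ψ i k * star (pairingMatrix ψ j k) * (A i k - A j k) =
      (A * pairingMatrix ψ) i (i - j) - (A * pairingMatrix ψ) j (i - j) := by
    simp only [pairingMatrix, of_apply, hψ.mul_star_apply, mul_apply, ← sum_sub_distrib]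
    exact sum_congr rfl fun k _ => by ring
  refine ⟨fun hA s g => ?_, fun hA i j => ?_⟩
  · have h := hA (g + s) g
    rwa [key, add_sub_cancel_left, sub_eq_zero] at h
  · rw [key, sub_eq_zero]
    simpa only [add_sub_cancel] using hA (i - j) j

theorem finrank_complexDefectSubmodule [DecidableEq G] :
    finrank ℂ (complexDefectSubmodule (pairingMatrix ψ)) =
      finrank ℂ (periodicColumns ℂ G) := by
  obtain ⟨u, hu⟩ := hψ.isUnit_pairingMatrix
  have h : complexDefectSubmodule (pairingMatrix ψ) =
      (periodicColumns ℂ G).comap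
        (u.mulRightLinearEquiv ℂ : Matrix G G ℂ →ₗ[ℂ] Matrix G G ℂ) :=
    Submodule.ext fun A => by simp [hψ.mem_complexDefectSubmodule_iff, hu]
  rw [h, Submodule.comap_equiv_eq_map_symm, LinearEquiv.finrank_map_eq]

theorem defect_pairingMatrix :
    defect (pairingMatrix ψ) = ∑ s : G, Fintype.card G / addOrderOf s := by
  classical
  rw [defect_eq_finrank_complexDefectSubmodule, hψ.finrank_complexDefectSubmodule,
    finrank_periodicColumns]

end IsNondegSymmPairing

end Pairing

section Fourier

variable (M : ℕ) [NeZero M]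

noncomputable def fourierPairing (i : Fin M) : AddChar (Fin M) ℂ where
  toFun j := Complex.exp (2 * Real.pi * Complex.I / M) ^ ((i : ℕ) * (j : ℕ))
  map_zero_eq_one' := by simp
  map_add_eq_mul' j j' := by
    rw [← pow_add, ← mul_add, Fin.val_add]
    exact pow_eq_pow_of_modEq ((Nat.mod_modEq _ _).mul_left _)
      (Complex.isPrimitiveRoot_exp M (NeZero.ne M)).pow_eq_one

theorem fourierMatrix_eq_pairingMatrix : FourierMatrix M = pairingMatrix (fourierPairing M) := rfl

theorem isNondegSymmPairing_fourierPairing : IsNondegSymmPairing (fourierPairing M) where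
  symm i j := by simp only [fourierPairing, AddChar.coe_mk, mul_comm]
  ne_one i hi := by
    have hi' : (i : ℕ) ≠ 0 := Fin.val_ne_zero_iff.2 hi
    refine AddChar.ne_one_iff.2 ⟨⟨1, by omega⟩, ?_⟩
    simpa [fourierPairing] using
      (Complex.isPrimitiveRoot_exp M (NeZero.ne M)).pow_ne_one_of_pos_of_lt hi' i.isLt

end Fourier

section OrderArith

variable {G H : Type*} [AddGroup G] [AddGroup H] [Fintype G] [Fintype H]

theorem card_div_addOrderOf_pos (g : G) : 0 < Fintype.card G / addOrderOf g :=
  Nat.div_pos (Nat.le_of_dvd Fintype.card_pos addOrderOf_dvd_card) (addOrderOf_pos g)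

theorem card_prod_div_addOrderOf (g : G) (h : H) :
    Fintype.card (G × H) / addOrderOf (g, h) =
      Fintype.card G / addOrderOf g * (Fintype.card H / addOrderOf h) *
        Nat.gcd (addOrderOf g) (addOrderOf h) := by
  rw [Prod.addOrderOf, Fintype.card_prod]
  refine Nat.div_eq_of_eq_mul_left (Nat.lcm_pos (addOrderOf_pos g) (addOrderOf_pos h)) ?_
  calc Fintype.card G * Fintype.card H
      = Fintype.card G / addOrderOf g * addOrderOf g *
          (Fintype.card H / addOrderOf h * addOrderOf h) := by
        rw [Nat.div_mul_cancel addOrderOf_dvd_card, Nat.div_mul_cancel addOrderOf_dvd_card]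
    _ = _ := by rw [mul_assoc _ (Nat.gcd _ _), Nat.gcd_mul_lcm]; ring

theorem coprime_card_iff_forall_coprime_addOrderOf :
    Nat.Coprime (Fintype.card G) (Fintype.card H) ↔
      ∀ (g : G) (h : H), Nat.Coprime (addOrderOf g) (addOrderOf h) := by
  refine ⟨fun hGH g h => (hGH.coprime_dvd_left addOrderOf_dvd_card).coprime_dvd_right
    addOrderOf_dvd_card, fun hord => Nat.coprime_of_dvd fun p hp hpG hpH => ?_⟩
  have := Fact.mk hp
  obtain ⟨g, hg⟩ := exists_prime_addOrderOf_dvd_card p hpG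
  obtain ⟨h, hh⟩ := exists_prime_addOrderOf_dvd_card p hpH
  have := hord g h
  rw [hg, hh, Nat.coprime_self] at this
  exact hp.one_lt.ne' this

theorem sum_card_prod_div_addOrderOf_eq_mul_iff :
    ∑ p : G × H, Fintype.card (G × H) / addOrderOf p =
        (∑ g : G, Fintype.card G / addOrderOf g) * ∑ h : H, Fintype.card H / addOrderOf h ↔
      Nat.Coprime (Fintype.card G) (Fintype.card H) := by
  have hle (p : G × H) (_ : p ∈ univ) :
      Fintype.card G / addOrderOf p.1 * (Fintype.card H / addOrderOf p.2) ≤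
        Fintype.card (G × H) / addOrderOf p := by
    rw [card_prod_div_addOrderOf]
    exact Nat.le_mul_of_pos_right _ (Nat.gcd_pos_of_pos_left _ (addOrderOf_pos _))
  rw [sum_mul_sum, ← Fintype.sum_prod_type', eq_comm, sum_eq_sum_iff_of_le hle,
    coprime_card_iff_forall_coprime_addOrderOf]
  simp only [mem_univ, forall_const, Prod.forall, card_prod_div_addOrderOf]
  refine forall₂_congr fun g h => ?_
  rw [eq_comm, Nat.mul_eq_left
    (Nat.mul_pos (card_div_addOrderOf_pos g) (card_div_addOrderOf_pos h)).ne',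
    Nat.coprime_iff_gcd_eq_one]

end OrderArith

/-- `d(F_M ⊗ F_N) = d(F_M)·d(F_N)` if and only if `gcd(M,N) = 1`. -/
theorem stmt_9 (M N : ℕ) (hM : 1 ≤ M) (hN : 1 ≤ N) :
    defect (FourierMatrix M ⊗ₖ FourierMatrix N) =
      defect (FourierMatrix M) * defect (FourierMatrix N) ↔ Nat.gcd M N = 1 := by
  have : NeZero M := ⟨by omega⟩
  have : NeZero N := ⟨by omega⟩
  have hFM := isNondegSymmPairing_fourierPairing M
  have hFN := isNondegSymmPairing_fourierPairing N
  rw [fourierMatrix_eq_pairingMatrix, fourierMatrix_eq_pairingMatrix, ← pairingMatrix_prodPairing,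
    (hFM.prod hFN).defect_pairingMatrix, hFM.defect_pairingMatrix, hFN.defect_pairingMatrix,
    sum_card_prod_div_addOrderOf_eq_mul_iff, Fintype.card_fin, Fintype.card_fin,
    Nat.coprime_iff_gcd_eq_one]
end
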